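/- Let $T_n$ and $W_m$ be finite-dimensional subspaces of a Hilbert space $V$ with $\beta(T_n, W_m) > 0$, set $\widetilde{T}_n = T_n \oplus (T_n^\perp \cap W_m)$, and let $f \in V$. If $u^* \in \widetilde{T}_n$ satisfies $P_{W_m} u^* = P_{W_m} f$, then $\|f - u^*\|_V \le \beta(T_n, W_m)^{-1} \inf_{\tilde v \in \widetilde{T}_n} \|f - \tilde v\|_V$. -/

import Mathlib

/-!
Let `e = f - u*`. Interpolation gives `e ∈ W_mᗮ`, and since `u* ∈ T̃_n` the distance from `f` to
`T̃_n` is `‖e - P_{T̃_n} e‖`. For `e ∈ W_mᗮ` the projection `p = P_{T̃_n} e` lies in `T_n`: its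
component in `T_nᗮ ⊓ W_m` is orthogonal to `e`. Then `‖p‖² = ⟪p - P_{W_m} p, e⟫`, and
Cauchy–Schwarz with `‖p - P_{W_m} p‖² ≤ (1 - β²) ‖p‖²` gives `‖p‖² ≤ (1 - β²) ‖e‖²`,
i.e. `β ‖e‖ ≤ ‖e - p‖` by Pythagoras.
-/

/-- The stability constant `β(A,B) = inf_{v ∈ A, v ≠ 0} ‖P_B v‖ / ‖v‖`. -/
noncomputable def beta {V : Type*} [NormedAddCommGroup V] [InnerProductSpace ℝ V]
    (A B : Submodule ℝ V) [Submodule.HasOrthogonalProjection B] : ℝ :=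
  sInf {r : ℝ | ∃ v ∈ A, v ≠ 0 ∧ r = ‖(Submodule.orthogonalProjectionOnto B v : V)‖ / ‖v‖}

open Submodule RealInnerProductSpace

section

variable {V : Type*} [NormedAddCommGroup V] [InnerProductSpace ℝ V]

section beta

variable (A B : Submodule ℝ V) [B.HasOrthogonalProjection]

lemma beta_nonneg : 0 ≤ beta A B :=
  Real.sInf_nonneg <| by rintro _ ⟨v, -, -, rfl⟩; positivity

lemma bddBelow_beta_set :
    BddBelow {r : ℝ | ∃ v ∈ A, v ≠ 0 ∧ r = ‖(B.orthogonalProjectionOnto v : V)‖ / ‖v‖} :=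
  ⟨0, by rintro _ ⟨v, -, -, rfl⟩; positivity⟩

lemma beta_le_one : beta A B ≤ 1 := by
  rcases Set.eq_empty_or_nonempty
      {r : ℝ | ∃ v ∈ A, v ≠ 0 ∧ r = ‖(B.orthogonalProjectionOnto v : V)‖ / ‖v‖}
    with h | ⟨_, v, hv, hv0, rfl⟩
  · -- `A = ⊥`, where `beta A B = sInf ∅ = 0`
    rw [beta, h, Real.sInf_empty]; exact zero_le_one
  · exact (csInf_le (bddBelow_beta_set A B) ⟨v, hv, hv0, rfl⟩).trans <|
      div_le_one_of_le₀ (B.norm_starProjection_apply_le v) (norm_nonneg v)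

variable {A B}

lemma beta_mul_norm_le {v : V} (hv : v ∈ A) : beta A B * ‖v‖ ≤ ‖B.starProjection v‖ := by
  rcases eq_or_ne v 0 with rfl | hv0
  · simp
  · rw [← le_div_iff₀ (norm_pos_iff.mpr hv0)]
    exact csInf_le (bddBelow_beta_set A B) ⟨v, hv, hv0, rfl⟩

lemma norm_sub_starProjection_sq_le {v : V} (hv : v ∈ A) :
    ‖v - B.starProjection v‖ ^ 2 ≤ (1 - beta A B ^ 2) * ‖v‖ ^ 2 := by
  have hpyth := B.norm_sq_eq_add_norm_sq_starProjection v
  rw [starProjection_orthogonal_val] at hpyth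
  have := pow_le_pow_left₀ (mul_nonneg (beta_nonneg A B) (norm_nonneg v)) (beta_mul_norm_le hv) 2
  nlinarith

lemma norm_sq_le_of_add_mem_orthogonal {p r : V} (hp : p ∈ A) (hpr : ⟪p, r⟫ = 0)
    (he : p + r ∈ Bᗮ) : ‖p‖ ^ 2 ≤ (1 - beta A B ^ 2) * ‖p + r‖ ^ 2 := by
  have hpe : ‖p‖ ^ 2 = ⟪p - B.starProjection p, p + r⟫ := by
    rw [inner_sub_left, inner_add_right, hpr, add_zero, real_inner_self_eq_norm_sq,
      inner_right_of_mem_orthogonal (B.starProjection_apply_mem p) he, sub_zero]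
  have hcs : (‖p‖ ^ 2) ^ 2 ≤ (1 - beta A B ^ 2) * ‖p‖ ^ 2 * ‖p + r‖ ^ 2 :=
    calc (‖p‖ ^ 2) ^ 2 ≤ (‖p - B.starProjection p‖ * ‖p + r‖) ^ 2 := by
          gcongr; rw [hpe]; exact real_inner_le_norm _ _
      _ = ‖p - B.starProjection p‖ ^ 2 * ‖p + r‖ ^ 2 := mul_pow _ _ _
      _ ≤ _ := by gcongr; exact norm_sub_starProjection_sq_le hp
  have hc : 0 ≤ (1 - beta A B ^ 2) * ‖p + r‖ ^ 2 :=
    mul_nonneg (sub_nonneg.mpr (pow_le_one₀ (beta_nonneg A B) (beta_le_one A B))) (sq_nonneg _)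
  nlinarith [sq_nonneg ‖p‖]

lemma beta_mul_norm_add_le {p r : V} (hp : p ∈ A) (hpr : ⟪p, r⟫ = 0) (he : p + r ∈ Bᗮ) :
    beta A B * ‖p + r‖ ≤ ‖r‖ := by
  have hpyth : ‖p + r‖ ^ 2 = ‖p‖ ^ 2 + ‖r‖ ^ 2 := by rw [norm_add_sq_real, hpr]; ring
  have := norm_sq_le_of_add_mem_orthogonal hp hpr he
  refine (pow_le_pow_iff_left₀ (by have := beta_nonneg A B; positivity) (norm_nonneg r)
    two_ne_zero).mp ?_
  rw [mul_pow]
  linarith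

end beta

lemma starProjection_mem_of_mem_orthogonal (T W : Submodule ℝ V)
    [(T ⊔ (Tᗮ ⊓ W)).HasOrthogonalProjection] {e : V} (he : e ∈ Wᗮ) :
    (T ⊔ (Tᗮ ⊓ W)).starProjection e ∈ T := by
  set K := T ⊔ (Tᗮ ⊓ W)
  obtain ⟨t, ht, z, ⟨hzT, hzW⟩, htz⟩ := mem_sup.mp (K.starProjection_apply_mem e)
  have hzK : z ∈ K := mem_sup_right ⟨hzT, hzW⟩
  have hz : ‖z‖ ^ 2 = 0 :=
    calc ‖z‖ ^ 2 = ⟪t + z, z⟫ := by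
          rw [inner_add_left, hzT t ht, zero_add, real_inner_self_eq_norm_sq]
      _ = ⟪e, z⟫ := by
          rw [htz, inner_starProjection_left_eq_right, starProjection_eq_self_iff.mpr hzK]
      _ = 0 := inner_left_of_mem_orthogonal hzW he
  rw [← htz, norm_eq_zero.mp (pow_eq_zero_iff two_ne_zero |>.mp hz), add_zero]
  exact ht

/-- This is the inequality `β(T, W) ≤ β(Wᗮ, T̃ᗮ)` of the paper, as `e - P_T̃ e = P_T̃ᗮ e`. -/
lemma beta_mul_norm_le_norm_sub_starProjection (T W : Submodule ℝ V) [W.HasOrthogonalProjection]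
    [(T ⊔ (Tᗮ ⊓ W)).HasOrthogonalProjection] {e : V} (he : e ∈ Wᗮ) :
    beta T W * ‖e‖ ≤ ‖e - (T ⊔ (Tᗮ ⊓ W)).starProjection e‖ := by
  have hPe_orth :
      ⟪(T ⊔ (Tᗮ ⊓ W)).starProjection e, e - (T ⊔ (Tᗮ ⊓ W)).starProjection e⟫ = 0 := by
    rw [real_inner_comm]; exact starProjection_inner_eq_zero _ _ (starProjection_apply_mem _ e)
  have := beta_mul_norm_add_le (starProjection_mem_of_mem_orthogonal T W he) hPe_orth
    (by rwa [add_sub_cancel])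
  rwa [add_sub_cancel] at this

lemma sInf_norm_sub_eq_norm_sub_starProjection (K : Submodule ℝ V) [K.HasOrthogonalProjection]
    (f : V) : sInf {r : ℝ | ∃ w ∈ K, r = ‖f - w‖} = ‖f - K.starProjection f‖ := by
  refine IsLeast.csInf_eq ⟨⟨_, K.starProjection_apply_mem f, rfl⟩, ?_⟩
  rintro _ ⟨w, hw, rfl⟩
  rw [starProjection_minimal]
  exact ciInf_le ⟨0, by rintro _ ⟨x, rfl⟩; positivity⟩ (⟨w, hw⟩ : K)

end

theorem stmt_11_general {V : Type*} [NormedAddCommGroup V] [InnerProductSpace ℝ V]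
    (Tn Wm : Submodule ℝ V) [FiniteDimensional ℝ Tn] [FiniteDimensional ℝ Wm]
    (hβpos : 0 < beta Tn Wm)
    (f ustar : V) (hu : ustar ∈ Tn ⊔ (Tnᗮ ⊓ Wm))
    (hinterp : Submodule.orthogonalProjectionOnto Wm ustar = Submodule.orthogonalProjectionOnto Wm f) :
    ‖f - ustar‖ ≤ (beta Tn Wm)⁻¹ * sInf {r : ℝ | ∃ w ∈ Tn ⊔ (Tnᗮ ⊓ Wm), r = ‖f - w‖} := by
  set K := Tn ⊔ (Tnᗮ ⊓ Wm)
  have he : f - ustar ∈ Wmᗮ :=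
    orthogonalProjectionOnto_eq_zero_iff.mp (by rw [map_sub, hinterp, sub_self])
  have hres : f - ustar - K.starProjection (f - ustar) = f - K.starProjection f := by
    rw [map_sub, starProjection_eq_self_iff.mpr hu]; abel
  rw [sInf_norm_sub_eq_norm_sub_starProjection, le_inv_mul_iff₀ hβpos, ← hres]
  exact beta_mul_norm_le_norm_sub_starProjection Tn Wm he

theorem stmt_11 {V : Type*} [NormedAddCommGroup V] [InnerProductSpace ℝ V] [CompleteSpace V]
    (Tn Wm : Submodule ℝ V) [FiniteDimensional ℝ Tn] [FiniteDimensional ℝ Wm]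
    (hβpos : 0 < beta Tn Wm)
    (f ustar : V) (hu : ustar ∈ Tn ⊔ (Tnᗮ ⊓ Wm))
    (hinterp : Submodule.orthogonalProjectionOnto Wm ustar = Submodule.orthogonalProjectionOnto Wm f) :
    ‖f - ustar‖ ≤ (beta Tn Wm)⁻¹ * sInf {r : ℝ | ∃ w ∈ Tn ⊔ (Tnᗮ ⊓ Wm), r = ‖f - w‖} :=
  stmt_11_general Tn Wm hβpos f ustar hu hinterp
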